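/- The sequence m(n) of numbers of peakless Motzkin paths satisfies m(0) = m(1) = m(2) = 1, m(3) = 2, and for every n ≥ 0 the four-term P-recurrence n·m(n) − (2n+3)·m(n+1) − (n+3)·m(n+2) − (2n+9)·m(n+3) + (n+6)·m(n+4) = 0. -/

import Mathlib

/-- Steps of a Motzkin path: up, down, flat. -/
inductive Step : Type
  | U : Step
  | D : Step
  | F : Step
  deriving DecidableEq

instance : Fintype Step :=
  ⟨{Step.U, Step.D, Step.F}, fun x => by cases x <;> simp⟩

/-- The value (vertical displacement) of a step. -/
def Step.val : Step → ℤ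
  | .U => 1
  | .D => -1
  | .F => 0

/-- The partial sum of the first `i` step values of the word `w`. -/
def psum {n : ℕ} (w : Fin n → Step) (i : ℕ) : ℤ :=
  ∑ j : Fin n, if (j : ℕ) < i then (w j).val else 0

/-- A word is peakless if no up-step is immediately followed by a down-step. -/
def Peakless {n : ℕ} (w : Fin n → Step) : Prop :=
  ∀ i : ℕ, ∀ h : i + 1 < n,
    ¬(w ⟨i, Nat.lt_of_succ_lt h⟩ = Step.U ∧ w ⟨i + 1, h⟩ = Step.D)

/-- `w` is a peakless Motzkin path from level `0` to level `k`:
all partial sums are nonnegative, the total sum is `k`, and there is no peak. -/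
def IsPeaklessMotzkinTo {n : ℕ} (w : Fin n → Step) (k : ℤ) : Prop :=
  (∀ i : ℕ, 0 ≤ psum w i) ∧ psum w n = k ∧ Peakless w

/-- The height of a path: the maximum of its partial sums (0 for the empty path). -/
def height {n : ℕ} (w : Fin n → Step) : ℤ :=
  (Finset.range (n + 1)).sup' Finset.nonempty_range_add_one (psum w)

/-- `mTo n k`: the number of peakless Motzkin paths of length `n` from level `0` to level `k`. -/
noncomputable def mTo (n : ℕ) (k : ℤ) : ℕ :=
  Nat.card {w : Fin n → Step // IsPeaklessMotzkinTo w k}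

/-- `m n`: the number of peakless Motzkin paths of length `n`. -/
noncomputable def m (n : ℕ) : ℕ := mTo n 0

/-- `A n ℓ`: the number of peakless Motzkin paths of length `n` of height at most `ℓ`. -/
noncomputable def A (n ℓ : ℕ) : ℕ :=
  Nat.card {w : Fin n → Step // IsPeaklessMotzkinTo w 0 ∧ height w ≤ (ℓ : ℤ)}

/-!
Cutting a nonempty peakless Motzkin path at its first step gives either `F p`, or `U v D u` where
`D` is the first return to level `0`; peaklessness forces `v ≠ []`. Hence the generating function
`M` of `m` satisfies `M = 1 + x M + x² (M - 1) M`. Differentiating this and eliminating `M²` and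
`M M'` leaves the linear equation
`(1 - 2x - x² - 2x³ + x⁴) · x M' = (x³ + x² + 3x - 2) M + 2 - 2x²`,
whose coefficient of `x^(n+4)` is the recurrence.
-/

namespace PeaklessMotzkin

open Finset PowerSeries

def level (l : List Step) : ℤ := (l.map Step.val).sum

@[simp] lemma level_nil : level [] = 0 := rfl

@[simp] lemma level_cons (s : Step) (l : List Step) : level (s :: l) = s.val + level l := by
  simp [level]

@[simp] lemma level_append (l₁ l₂ : List Step) : level (l₁ ++ l₂) = level l₁ + level l₂ := by
  simp [level]

def IsMotzkin (l : List Step) : Prop :=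
  (∀ k, 0 ≤ level (l.take k)) ∧ level l = 0

def NoPeak (a b : Step) : Prop := ¬(a = .U ∧ b = .D)

def IsPeaklessMotzkin (l : List Step) : Prop :=
  IsMotzkin l ∧ l.IsChain NoPeak

lemma psum_eq_level_take {n : ℕ} (w : Fin n → Step) (k : ℕ) :
    psum w k = level ((List.ofFn w).take k) := by
  rw [psum, level, List.map_take, List.map_ofFn, List.sum_take_ofFn, Finset.sum_filter]
  rfl

lemma peakless_iff_isChain {n : ℕ} (w : Fin n → Step) :
    Peakless w ↔ (List.ofFn w).IsChain NoPeak := by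
  simp [List.isChain_iff_getElem, Peakless, NoPeak]

lemma isPeaklessMotzkinTo_zero_iff {n : ℕ} (w : Fin n → Step) :
    IsPeaklessMotzkinTo w 0 ↔ IsPeaklessMotzkin (List.ofFn w) := by
  simp only [IsPeaklessMotzkinTo, IsPeaklessMotzkin, IsMotzkin, psum_eq_level_take,
    peakless_iff_isChain]
  rw [List.take_of_length_le (by simp)]
  tauto

lemma card_fun_eq_card_list {α : Type*} (P : List α → Prop) (n : ℕ) :
    Nat.card {w : Fin n → α // P (List.ofFn w)} = Nat.card {l : List α // l.length = n ∧ P l} :=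
  Nat.card_congr <| ((Equiv.vectorEquivFin α n).symm.subtypeEquiv fun w => by
    rw [Equiv.vectorEquivFin, Equiv.coe_fn_symm_mk, ← List.Vector.toList_ofFn]
    rfl).trans (Equiv.subtypeSubtypeEquivSubtypeInter _ P)

lemma m_eq_card (n : ℕ) :
    m n = Nat.card {l : List Step // l.length = n ∧ IsPeaklessMotzkin l} := by
  simp only [m, mTo, isPeaklessMotzkinTo_zero_iff]
  exact card_fun_eq_card_list IsPeaklessMotzkin n

lemma isMotzkin_nil : IsMotzkin [] := ⟨by simp, rfl⟩

lemma isMotzkin_F_cons_iff {l : List Step} : IsMotzkin (.F :: l) ↔ IsMotzkin l := by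
  refine ⟨fun h => ⟨fun k => ?_, ?_⟩, fun h => ⟨fun k => ?_, ?_⟩⟩
  · simpa [Step.val] using h.1 (k + 1)
  · simpa [Step.val] using h.2
  · cases k <;> simp [Step.val, h.1]
  · simp [Step.val, h.2]

lemma not_isMotzkin_D_cons (l : List Step) : ¬IsMotzkin (.D :: l) := fun h => by
  simpa [Step.val] using h.1 1

lemma neg_one_le_level_take_append_D {v u : List Step} (hv : IsMotzkin v) (hu : IsMotzkin u)
    (k : ℕ) : -1 ≤ level ((v ++ .D :: u).take k) := by
  rw [List.take_append, level_append]
  rcases le_or_gt k v.length with hk | hk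
  · simpa [Nat.sub_eq_zero_of_le hk] using (hv.1 k).trans' (by norm_num)
  · obtain ⟨j, rfl⟩ : ∃ j, k = v.length + (j + 1) := ⟨k - v.length - 1, by omega⟩
    rw [List.take_of_length_le hk.le, hv.2, Nat.add_sub_cancel_left, List.take_succ_cons]
    simpa [Step.val] using hu.1 j

lemma IsMotzkin.U_append_D {v u : List Step} (hv : IsMotzkin v) (hu : IsMotzkin u) :
    IsMotzkin (.U :: (v ++ .D :: u)) := by
  refine ⟨fun k => ?_, by simp [Step.val, hv.2, hu.2]⟩
  cases k with
  | zero => simp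
  | succ k =>
    have := neg_one_le_level_take_append_D hv hu k
    simp only [List.take_succ_cons, level_cons, Step.val]
    omega

lemma IsMotzkin.exists_eq_append_D {t : List Step} (h : IsMotzkin (.U :: t)) :
    ∃ v u, t = v ++ .D :: u ∧ IsMotzkin v ∧ IsMotzkin u := by
  have hpre (k : ℕ) : -1 ≤ level (t.take k) := by
    have := h.1 (k + 1)
    simp only [List.take_succ_cons, level_cons, Step.val] at this
    omega
  have ht : level t = -1 := by
    have := h.2
    simp only [level_cons, Step.val] at this
    omega
  -- `U :: t` first returns to level `0` where `t` first goes negative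
  have hex : ∃ k, level (t.take k) < 0 := ⟨t.length, by simp [ht]⟩
  obtain ⟨j, hj⟩ : ∃ j, Nat.find hex = j + 1 :=
    Nat.exists_eq_add_one_of_ne_zero fun h0 => by simpa [h0] using Nat.find_spec hex
  have hneg : level (t.take (j + 1)) < 0 := by
    rw [← hj]
    exact Nat.find_spec hex
  have hmin (i : ℕ) (hi : i ≤ j) : 0 ≤ level (t.take i) :=
    not_lt.1 (Nat.find_min hex (by omega))
  have hjt : j < t.length := by
    by_contra! hjt
    rw [List.take_of_length_le (by omega)] at hneg
    exact hneg.not_ge (by simpa [List.take_of_length_le hjt] using hmin j le_rfl)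
  have hstep : level (t.take (j + 1)) = level (t.take j) + t[j].val := by
    rw [List.take_add_one, List.getElem?_eq_getElem hjt, Option.toList_some, level_append]
    simp
  obtain ⟨hD, hprev⟩ : t[j] = .D ∧ level (t.take j) = 0 := by
    have := hmin j le_rfl
    have := hpre (j + 1)
    cases hs : t[j] <;> simp only [hs, Step.val, reduceCtorEq, true_and, false_and] at hstep ⊢
      <;> omega
  have hneg' : level (t.take (j + 1)) = -1 := by rw [hstep, hprev, hD]; rfl
  refine ⟨t.take j, t.drop (j + 1), ?_, ⟨fun i => ?_, hprev⟩, fun i => ?_, ?_⟩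
  · rw [← hD, ← List.drop_eq_getElem_cons hjt, List.take_append_drop]
  · rw [List.take_take]
    exact hmin _ (min_le_right i j)
  · have := hpre (j + 1 + i)
    rw [List.take_add, level_append, hneg'] at this
    omega
  · have := congrArg level (List.take_append_drop (j + 1) t)
    rw [level_append, hneg', ht] at this
    omega

lemma IsMotzkin.length_le_of_append_D_eq {v v' u u' : List Step} (hv : IsMotzkin v)
    (hv' : level v' = 0) (h : v ++ .D :: u = v' ++ .D :: u') : v.length ≤ v'.length := by
  by_contra! hlt
  -- otherwise `v' ++ [D]` is a prefix of `v` of level `-1`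
  have hpre : v.take (v'.length + 1) = v' ++ [.D] := by
    rw [← List.take_append_of_le_length hlt, h, List.take_append]
    simp
  simpa [hpre, hv', Step.val] using hv.1 (v'.length + 1)

lemma IsMotzkin.append_D_inj {v v' u u' : List Step} (hv : IsMotzkin v) (hv' : IsMotzkin v')
    (h : v ++ .D :: u = v' ++ .D :: u') : v = v' ∧ u = u' := by
  have := List.append_inj h (le_antisymm (hv.length_le_of_append_D_eq hv'.2 h)
    (hv'.length_le_of_append_D_eq hv.2 h.symm))
  simpa using this

lemma IsMotzkin.head?_ne_D {v : List Step} (hv : IsMotzkin v) : ∀ s ∈ v.head?, s ≠ .D := by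
  rintro s hs rfl
  cases v with
  | nil => cases hs
  | cons a l =>
    obtain rfl : a = .D := by simpa using hs
    exact not_isMotzkin_D_cons l hv

lemma IsMotzkin.getLast?_ne_U {v : List Step} (hv : IsMotzkin v) : ∀ s ∈ v.getLast?, s ≠ .U := by
  rintro s hs rfl
  rcases v.eq_nil_or_concat' with rfl | ⟨l, a, rfl⟩
  · cases hs
  · obtain rfl : a = .U := by simpa using hs
    have h1 : 0 ≤ level l := by simpa using hv.1 l.length
    have h2 : level l + 1 = 0 := by simpa [Step.val] using hv.2
    omega

lemma isChain_U_append_D_iff {v u : List Step} (hv : IsMotzkin v) :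
    (.U :: (v ++ .D :: u)).IsChain NoPeak ↔ v ≠ [] ∧ v.IsChain NoPeak ∧ u.IsChain NoPeak := by
  rcases v with _ | ⟨a, l⟩
  · simp [NoPeak]
  · have hhead := hv.head?_ne_D
    have hlast := hv.getLast?_ne_U
    rw [← List.cons_append, List.isChain_append]
    simp_all [List.isChain_cons, NoPeak]

lemma isPeaklessMotzkin_F_cons_iff {l : List Step} :
    IsPeaklessMotzkin (.F :: l) ↔ IsPeaklessMotzkin l := by
  simp [IsPeaklessMotzkin, isMotzkin_F_cons_iff, List.isChain_cons, NoPeak]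

lemma IsPeaklessMotzkin.U_append_D {v u : List Step} (hv : IsPeaklessMotzkin v)
    (hu : IsPeaklessMotzkin u) (hne : v ≠ []) : IsPeaklessMotzkin (.U :: (v ++ .D :: u)) :=
  ⟨hv.1.U_append_D hu.1, (isChain_U_append_D_iff hv.1).2 ⟨hne, hv.2, hu.2⟩⟩

lemma IsPeaklessMotzkin.exists_eq_append_D {t : List Step} (h : IsPeaklessMotzkin (.U :: t)) :
    ∃ v u, t = v ++ .D :: u ∧ (v ≠ [] ∧ IsPeaklessMotzkin v) ∧ IsPeaklessMotzkin u := by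
  obtain ⟨v, u, rfl, hv, hu⟩ := h.1.exists_eq_append_D
  obtain ⟨hne, hvc, huc⟩ := (isChain_U_append_D_iff hv).1 h.2
  exact ⟨v, u, rfl, ⟨hne, hv, hvc⟩, hu, huc⟩

abbrev Words {α : Type*} (P : List α → Prop) (n : ℕ) : Type _ :=
  {l : List α // l.length = n ∧ P l}

instance {α : Type*} [Finite α] (P : List α → Prop) (n : ℕ) : Finite (Words P n) :=
  ((List.finite_length_eq α n).subset fun _ h => h.1).to_subtype

lemma card_pairs_eq_sum_antidiagonal {α : Type*} [Finite α] (P Q : List α → Prop) (n : ℕ) :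
    Nat.card {q : List α × List α // q.1.length + q.2.length = n ∧ P q.1 ∧ Q q.2} =
      ∑ p ∈ antidiagonal n, Nat.card (Words P p.1) * Nat.card (Words Q p.2) := by
  let e : {q : List α × List α // q.1.length + q.2.length = n ∧ P q.1 ∧ Q q.2} ≃
      Σ p : antidiagonal n, Words P p.1.1 × Words Q p.1.2 :=
    { toFun q := ⟨⟨(q.1.1.length, q.1.2.length), mem_antidiagonal.2 q.2.1⟩,
        ⟨q.1.1, rfl, q.2.2.1⟩, ⟨q.1.2, rfl, q.2.2.2⟩⟩
      invFun x := ⟨(x.2.1.1, x.2.2.1), by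
        obtain ⟨⟨p, hp⟩, ⟨a, ha, hPa⟩, ⟨b, hb, hQb⟩⟩ := x
        exact ⟨by simpa [ha, hb] using hp, hPa, hQb⟩⟩
      left_inv _ := rfl
      right_inv := by
        rintro ⟨⟨⟨i, j⟩, hp⟩, ⟨a, ha, hPa⟩, ⟨b, hb, hQb⟩⟩
        dsimp only at ha hb
        subst ha hb
        rfl }
  rw [Nat.card_congr e, Nat.card_sigma]
  simp only [Nat.card_prod]
  exact Finset.sum_coe_sort (antidiagonal n) fun p =>
    Nat.card (Words P p.1) * Nat.card (Words Q p.2)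

/-- The pairs `(v, u)` with `U v D u` a peakless Motzkin path of length `n + 1`. -/
abbrev ReturnPairs (n : ℕ) : Type :=
  {q : List Step × List Step // q.1.length + q.2.length + 1 = n ∧
    (q.1 ≠ [] ∧ IsPeaklessMotzkin q.1) ∧ IsPeaklessMotzkin q.2}

def firstReturn (n : ℕ) :
    Words IsPeaklessMotzkin n ⊕ ReturnPairs n → Words IsPeaklessMotzkin (n + 1)
  | .inl l => ⟨.F :: l.1, by simp [l.2.1], isPeaklessMotzkin_F_cons_iff.2 l.2.2⟩
  | .inr q => ⟨.U :: (q.1.1 ++ .D :: q.1.2), by simp; omega,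
      q.2.2.1.2.U_append_D q.2.2.2 q.2.2.1.1⟩

lemma firstReturn_bijective (n : ℕ) : Function.Bijective (firstReturn n) := by
  constructor
  · rintro (⟨l, _⟩ | ⟨⟨v, u⟩, _, ⟨_, hv⟩, _⟩) (⟨l', _⟩ | ⟨⟨v', u'⟩, _, ⟨_, hv'⟩, _⟩) h <;>
      simp only [firstReturn, Subtype.mk.injEq, List.cons.injEq, reduceCtorEq, true_and,
        false_and] at h
    · subst h
      rfl
    · obtain ⟨rfl, rfl⟩ := hv.1.append_D_inj hv'.1 h
      rfl
  · rintro ⟨_ | ⟨s, t⟩, hlen, h⟩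
    · simp at hlen
    · cases s with
      | U =>
        obtain ⟨v, u, rfl, hv, hu⟩ := h.exists_eq_append_D
        exact ⟨.inr ⟨(v, u), by
          simp only [List.length_cons, List.length_append] at hlen ⊢
          omega, hv, hu⟩, rfl⟩
      | D => exact absurd h.1 (not_isMotzkin_D_cons t)
      | F => exact ⟨.inl ⟨t, by simpa using hlen, isPeaklessMotzkin_F_cons_iff.1 h⟩, rfl⟩

lemma card_words_succ (n : ℕ) :
    Nat.card (Words IsPeaklessMotzkin (n + 1)) =
      Nat.card (Words IsPeaklessMotzkin n) + Nat.card (ReturnPairs n) := by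
  have : Finite (Words IsPeaklessMotzkin n ⊕ ReturnPairs n) :=
    Finite.of_injective _ (firstReturn_bijective n).injective
  have := Finite.sum_right (Words IsPeaklessMotzkin n) (β := ReturnPairs n)
  rw [← Nat.card_sum, Nat.card_congr (Equiv.ofBijective _ (firstReturn_bijective n))]

lemma m_zero : m 0 = 1 := by
  rw [m_eq_card, Nat.card_eq_one_iff_exists]
  exact ⟨⟨[], rfl, isMotzkin_nil, List.isChain_nil⟩,
    fun l => Subtype.ext (List.eq_nil_of_length_eq_zero l.2.1)⟩

noncomputable def mSeries : ℤ⟦X⟧ := mk fun n => (m n : ℤ)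

@[simp] lemma coeff_mSeries (n : ℕ) : coeff n mSeries = m n := coeff_mk n _

@[simp] lemma constantCoeff_mSeries : constantCoeff mSeries = m 0 := by
  rw [← coeff_zero_eq_constantCoeff_apply, coeff_mSeries]

lemma card_words_ne_nil (i : ℕ) :
    (Nat.card (Words (fun l => l ≠ [] ∧ IsPeaklessMotzkin l) i) : ℤ) = coeff i (mSeries - 1) := by
  cases i with
  | zero =>
    have : IsEmpty (Words (fun l => l ≠ [] ∧ IsPeaklessMotzkin l) 0) :=
      ⟨fun l => l.2.2.1 (List.eq_nil_of_length_eq_zero l.2.1)⟩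
    simp [m_zero]
  | succ i =>
    rw [map_sub, coeff_mSeries, coeff_one, if_neg i.succ_ne_zero, sub_zero, m_eq_card]
    exact congrArg _ (Nat.card_congr (Equiv.subtypeEquivRight fun l =>
      ⟨fun h => ⟨h.1, h.2.2⟩, fun h => ⟨h.1, List.ne_nil_of_length_eq_add_one h.1, h.2⟩⟩))

lemma card_returnPairs (n : ℕ) :
    (Nat.card (ReturnPairs (n + 1)) : ℤ) = coeff n ((mSeries - 1) * mSeries) := by
  simp only [ReturnPairs, Nat.add_right_cancel_iff]
  rw [card_pairs_eq_sum_antidiagonal (fun v => v ≠ [] ∧ IsPeaklessMotzkin v), coeff_mul]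
  push_cast
  simp only [card_words_ne_nil, ← m_eq_card, coeff_mSeries]

lemma m_succ (n : ℕ) :
    (m (n + 1) : ℤ) = m n + coeff (n + 1) (X ^ 2 * ((mSeries - 1) * mSeries)) := by
  rw [m_eq_card, m_eq_card, card_words_succ, Nat.cast_add]
  congr 1
  cases n with
  | zero =>
    have : IsEmpty (ReturnPairs 0) := ⟨fun q => Nat.succ_ne_zero _ q.2.1⟩
    simp [coeff_X_pow_mul']
  | succ n => rw [card_returnPairs, show n + 1 + 1 = n + 2 from rfl, coeff_X_pow_mul]

lemma mSeries_eq : mSeries = 1 + X * mSeries + X ^ 2 * ((mSeries - 1) * mSeries) := by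
  ext n
  cases n with
  | zero => simp [m_zero]
  | succ n => simp [m_succ]

lemma coeff_X_mul_derivative {R : Type*} [CommSemiring R] (f : R⟦X⟧) (n : ℕ) :
    coeff n (X * d⁄dX R f) = n * coeff n f := by
  cases n with
  | zero => simp
  | succ n =>
    rw [coeff_succ_X_mul, coeff_derivative]
    push_cast
    ring

lemma mSeries_ode :
    (1 - 2 * X - X ^ 2 - 2 * X ^ 3 + X ^ 4) * (X * d⁄dX ℤ mSeries) =
      (X ^ 3 + X ^ 2 + 3 * X - 2) * mSeries + 2 - 2 * X ^ 2 := by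
  have h := congrArg (d⁄dX ℤ) mSeries_eq
  simp only [map_add, Derivation.leibniz, Derivation.leibniz_pow, map_sub,
    Derivation.map_one_eq_zero, derivative_X, smul_eq_mul] at h
  linear_combination (2 - 2 * X ^ 2 + 4 * X ^ 2 * mSeries + 4 * X ^ 3 * d⁄dX ℤ mSeries) * mSeries_eq
    + (X * (1 - X + X ^ 2) - 2 * X ^ 3 * mSeries) * h

lemma m_recurrence (n : ℕ) :
    (n : ℤ) * m n - (2 * (n : ℤ) + 3) * m (n + 1) - ((n : ℤ) + 3) * m (n + 2)
      - (2 * (n : ℤ) + 9) * m (n + 3) + ((n : ℤ) + 6) * m (n + 4) = 0 := by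
  set θ := X * d⁄dX ℤ mSeries
  have hθ (k : ℕ) : coeff k θ = k * m k := by simp [θ, coeff_X_mul_derivative]
  -- numerals written as `C c`, so that `coeff` commutes with them
  have h : θ - C 2 * (X * θ) - X ^ 2 * θ - C 2 * (X ^ 3 * θ) + X ^ 4 * θ =
      X ^ 3 * mSeries + X ^ 2 * mSeries + C 3 * (X * mSeries) - C 2 * mSeries + C 2
        - C 2 * X ^ 2 := by
    simp only [map_ofNat]
    linear_combination mSeries_ode
  have hcoeff : (n + 4 : ℤ) * m (n + 4) - 2 * ((n + 3) * m (n + 3)) - (n + 2) * m (n + 2)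
      - 2 * ((n + 1) * m (n + 1)) + n * m n =
        m (n + 1) + m (n + 2) + 3 * m (n + 3) - 2 * m (n + 4) := by
    have := congrArg (coeff (n + 4)) h
    simp only [map_sub, map_add, coeff_C_mul, coeff_C, coeff_X_pow_mul', coeff_succ_X_mul, hθ,
      coeff_mSeries] at this
    simpa using this
  linear_combination hcoeff

lemma m_one : m 1 = 1 := by
  simpa [m_zero, coeff_X_pow_mul'] using m_succ 0

lemma m_two : m 2 = 1 := by
  simpa [m_zero, m_one, coeff_X_pow_mul'] using m_succ 1

lemma m_three : m 3 = 2 := by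
  have : (m 3 : ℤ) = 2 := by
    simpa [m_zero, m_one, m_two, coeff_mul, Finset.Nat.antidiagonal_succ] using m_succ 2
  exact_mod_cast this

end PeaklessMotzkin

/-- `m(0) = m(1) = m(2) = 1`, `m(3) = 2`, and the four-term P-recurrence
`n·m(n) − (2n+3)·m(n+1) − (n+3)·m(n+2) − (2n+9)·m(n+3) + (n+6)·m(n+4) = 0` for all `n ≥ 0`. -/
theorem peakless_P_recurrence :
    m 0 = 1 ∧ m 1 = 1 ∧ m 2 = 1 ∧ m 3 = 2 ∧
    ∀ n : ℕ,
      (n : ℤ) * m n - (2 * (n : ℤ) + 3) * m (n + 1) - ((n : ℤ) + 3) * m (n + 2)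
        - (2 * (n : ℤ) + 9) * m (n + 3) + ((n : ℤ) + 6) * m (n + 4) = 0 :=
  ⟨PeaklessMotzkin.m_zero, PeaklessMotzkin.m_one, PeaklessMotzkin.m_two, PeaklessMotzkin.m_three,
    PeaklessMotzkin.m_recurrence⟩
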